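/- The weighted squared interpolation error on the unit interval satisfies ∫_0^1 (f̂(ξ) − L̂(ξ))² ĝ(ξ) dξ ≤ 2 ∫_0^1 Ĝ(t) (f̂″(t))² dt. -/

import Mathlib

/-!
Expanding `f` about `x` to first order with integral remainder, once towards `0` and once
towards `1`, and eliminating `f' x` gives the Peano kernel representation
`f x - L x = -(1 - x) ∫₀ˣ t f''(t) dt - x ∫ₓ¹ (1 - t) f''(t) dt`.
Cauchy–Schwarz against the kernels `t` and `1 - t`, whose squares integrate to `x³/3` and
`(1 - x)³/3`, together with `(a + b)² ≤ 2a² + 2b²`, bounds the squared error by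
`2((1 - x)²x³/3 ∫₀ˣ f''² + x²(1 - x)³/3 ∫ₓ¹ f''²)`. After multiplying by `g` and integrating,
exchanging the order of integration in both terms turns the right-hand side into `2 ∫₀¹ Ĝ f''²`.
-/

open MeasureTheory intervalIntegral Set

theorem sq_integral_mul_le_integral_sq_mul_integral_sq {α : Type*} [MeasurableSpace α]
    {μ : Measure α} {u v : α → ℝ} (hu : Integrable (fun x => u x ^ 2) μ)
    (hv : Integrable (fun x => v x ^ 2) μ) (huv : Integrable (fun x => u x * v x) μ) :
    (∫ x, u x * v x ∂μ) ^ 2 ≤ (∫ x, u x ^ 2 ∂μ) * ∫ x, v x ^ 2 ∂μ := by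
  have quadratic_nonneg : ∀ s : ℝ,
      0 ≤ (∫ x, u x ^ 2 ∂μ) * (s * s) + (2 * ∫ x, u x * v x ∂μ) * s + ∫ x, v x ^ 2 ∂μ := by
    intro s
    have expand : ∀ x, (s * u x + v x) ^ 2 = s * s * u x ^ 2 + 2 * s * (u x * v x) + v x ^ 2 :=
      fun x => by ring
    calc (0 : ℝ) ≤ ∫ x, (s * u x + v x) ^ 2 ∂μ := integral_nonneg fun x => sq_nonneg _
      _ = _ := by
        simp only [expand]
        rw [MeasureTheory.integral_add ?_ hv,
          MeasureTheory.integral_add (hu.const_mul _) (huv.const_mul _),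
          MeasureTheory.integral_const_mul, MeasureTheory.integral_const_mul]
        · ring
        · exact (hu.const_mul _).add (huv.const_mul _)
  have := discrim_le_zero quadratic_nonneg
  rw [discrim] at this
  nlinarith

theorem sq_intervalIntegral_mul_le {a b : ℝ} (hab : a ≤ b) {u v : ℝ → ℝ}
    (hu : ContinuousOn u (Icc a b)) (hv : ContinuousOn v (Icc a b)) :
    (∫ t in a..b, u t * v t) ^ 2 ≤ (∫ t in a..b, u t ^ 2) * ∫ t in a..b, v t ^ 2 := by
  simp only [integral_of_le hab]
  exact sq_integral_mul_le_integral_sq_mul_integral_sq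
    ((hu.pow 2).intervalIntegrable_of_Icc hab).1 ((hv.pow 2).intervalIntegrable_of_Icc hab).1
    ((hu.mul hv).intervalIntegrable_of_Icc hab).1

theorem hasDerivAt_integral_right_of_continuousOn {u : ℝ → ℝ} {a b c x : ℝ}
    (hu : ContinuousOn u (Icc a b)) (hc : c ∈ Icc a b) (hx : x ∈ Ioo a b) :
    HasDerivAt (fun y => ∫ t in c..y, u t) (u x) x :=
  integral_hasDerivAt_right
    ((hu.mono (uIcc_subset_Icc hc (Ioo_subset_Icc_self hx))).intervalIntegrable)
    ((hu.mono Ioo_subset_Icc_self).stronglyMeasurableAtFilter isOpen_Ioo x hx)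
    (hu.continuousAt (Icc_mem_nhds hx.1 hx.2))

theorem continuousOn_primitive_of_le {u : ℝ → ℝ} {a b : ℝ} (hab : a ≤ b)
    (hu : ContinuousOn u (Icc a b)) : ContinuousOn (fun x => ∫ t in a..x, u t) (Icc a b) := by
  rw [← uIcc_of_le hab] at hu ⊢
  exact continuousOn_primitive_interval hu.integrableOn_uIcc

theorem continuousOn_tail_of_le {u : ℝ → ℝ} {a b : ℝ} (hab : a ≤ b)
    (hu : ContinuousOn u (Icc a b)) : ContinuousOn (fun x => ∫ t in x..b, u t) (Icc a b) := by
  rw [← uIcc_of_le hab] at hu ⊢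
  exact continuousOn_primitive_interval_left hu.integrableOn_uIcc

theorem integral_mul_primitive_eq_integral_tail_mul {a b : ℝ} (hab : a ≤ b) {u v : ℝ → ℝ}
    (hu : ContinuousOn u (Icc a b)) (hv : ContinuousOn v (Icc a b)) :
    ∫ x in a..b, u x * (∫ t in a..x, v t) = ∫ x in a..b, (∫ t in x..b, u t) * v x := by
  have hU : ∀ x ∈ Ioo a b, HasDerivAt (fun y => ∫ t in y..b, u t) (-u x) x := fun x hx => by
    simp_rw [integral_symm b]
    exact (hasDerivAt_integral_right_of_continuousOn hu (right_mem_Icc.2 hab) hx).neg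
  have hV : ∀ x ∈ Ioo a b, HasDerivAt (fun y => ∫ t in a..y, v t) (v x) x := fun x hx =>
    hasDerivAt_integral_right_of_continuousOn hv (left_mem_Icc.2 hab) hx
  -- both boundary terms of the integration by parts vanish
  have parts := integral_mul_deriv_eq_deriv_mul_of_hasDerivAt
    (by rw [uIcc_of_le hab]; exact continuousOn_tail_of_le hab hu)
    (by rw [uIcc_of_le hab]; exact continuousOn_primitive_of_le hab hv)
    (by rwa [min_eq_left hab, max_eq_right hab]) (by rwa [min_eq_left hab, max_eq_right hab])
    (hu.intervalIntegrable_of_Icc hab).neg (hv.intervalIntegrable_of_Icc hab)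
  simp only [integral_same, mul_zero, zero_mul, sub_zero, Pi.neg_apply, neg_mul,
    intervalIntegral.integral_neg, zero_sub, neg_neg] at parts
  exact parts.symm

theorem integral_mul_primitive_add_mul_tail_eq {a b : ℝ} (hab : a ≤ b) {p r w : ℝ → ℝ}
    (hp : ContinuousOn p (Icc a b)) (hr : ContinuousOn r (Icc a b))
    (hw : ContinuousOn w (Icc a b)) :
    ∫ x in a..b, (p x * (∫ t in a..x, w t) + r x * ∫ t in x..b, w t)
      = ∫ x in a..b, ((∫ t in a..x, r t) + ∫ t in x..b, p t) * w x := by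
  have tail_swap : ∫ x in a..b, r x * (∫ t in x..b, w t)
      = ∫ x in a..b, (∫ t in a..x, r t) * w x := by
    simpa only [mul_comm] using (integral_mul_primitive_eq_integral_tail_mul hab hw hr).symm
  simp only [add_mul]
  rw [intervalIntegral.integral_add, intervalIntegral.integral_add,
    integral_mul_primitive_eq_integral_tail_mul hab hp hw, tail_swap, add_comm]
  all_goals apply ContinuousOn.intervalIntegrable_of_Icc hab
  · exact (continuousOn_primitive_of_le hab hr).mul hw
  · exact (continuousOn_tail_of_le hab hp).mul hw
  · exact hp.mul (continuousOn_primitive_of_le hab hw)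
  · exact hr.mul (continuousOn_tail_of_le hab hw)

theorem taylor_integral_remainder_of_hasDerivAt {f f' f'' : ℝ → ℝ} {x₀ x : ℝ}
    (hf : ContinuousOn f (uIcc x₀ x)) (hf' : ContinuousOn f' (uIcc x₀ x))
    (hd : ∀ t ∈ Ioo (min x₀ x) (max x₀ x), HasDerivAt f (f' t) t)
    (hd' : ∀ t ∈ Ioo (min x₀ x) (max x₀ x), HasDerivAt f' (f'' t) t)
    (hf'' : IntervalIntegrable f'' volume x₀ x) :
    f x = f x₀ + f' x₀ * (x - x₀) + ∫ t in x₀..x, (x - t) * f'' t := by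
  have hφ : ∀ t ∈ Ioo (min x₀ x) (max x₀ x),
      HasDerivWithinAt (fun t => f t + f' t * (x - t)) ((x - t) * f'' t) (Ioi t) t := by
    intro t ht
    refine (((hd t ht).add ((hd' t ht).mul ((hasDerivAt_id' t).const_sub x))).congr_deriv
      ?_).hasDerivWithinAt
    ring
  have hφc : ContinuousOn (fun t => f t + f' t * (x - t)) (uIcc x₀ x) := by fun_prop
  rw [integral_eq_sub_of_hasDeriv_right hφc hφ
    (hf''.continuousOn_mul (continuousOn_const.sub continuousOn_id))]
  ring

theorem deriv_deriv_eq_of_hasDerivAt {f f' f'' : ℝ → ℝ} {s : Set ℝ} (hs : IsOpen s)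
    (hd : ∀ x ∈ s, HasDerivAt f (f' x) x) (hd' : ∀ x ∈ s, HasDerivAt f' (f'' x) x)
    {x : ℝ} (hx : x ∈ s) : deriv (deriv f) x = f'' x := by
  have : deriv f =ᶠ[nhds x] f' :=
    Filter.eventually_of_mem (hs.mem_nhds hx) fun y hy => (hd y hy).deriv
  rw [this.deriv_eq, (hd' x hx).deriv]

theorem exists_hasDerivAt_of_contDiffOn_two {f : ℝ → ℝ} {a b : ℝ} (hab : a < b)
    (hf : ContDiffOn ℝ 2 f (Icc a b)) :
    ∃ f' f'' : ℝ → ℝ, ContinuousOn f' (Icc a b) ∧ ContinuousOn f'' (Icc a b) ∧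
      (∀ x ∈ Ioo a b, HasDerivAt f (f' x) x) ∧ ∀ x ∈ Ioo a b, HasDerivAt f' (f'' x) x := by
  have hs := uniqueDiffOn_Icc hab
  have hf' : ContDiffOn ℝ 1 (derivWithin f (Icc a b)) (Icc a b) := hf.derivWithin hs le_rfl
  have hasDerivAt_of_contDiffOn {g : ℝ → ℝ} (hg : ContDiffOn ℝ 1 g (Icc a b)) (x : ℝ)
      (hx : x ∈ Ioo a b) : HasDerivAt g (derivWithin g (Icc a b) x) x := by
    have hmem : Icc a b ∈ nhds x := Icc_mem_nhds hx.1 hx.2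
    rw [derivWithin_of_mem_nhds hmem]
    exact ((hg.differentiableOn one_ne_zero x (Ioo_subset_Icc_self hx)).differentiableAt
      hmem).hasDerivAt
  exact ⟨_, _, hf'.continuousOn, hf'.continuousOn_derivWithin hs le_rfl,
    hasDerivAt_of_contDiffOn (hf.of_le one_le_two), hasDerivAt_of_contDiffOn hf'⟩

theorem sub_linearInterpolation_eq_integral {f f' f'' : ℝ → ℝ}
    (hf : ContinuousOn f (Icc 0 1)) (hf' : ContinuousOn f' (Icc 0 1))
    (hd : ∀ t ∈ Ioo 0 1, HasDerivAt f (f' t) t) (hd' : ∀ t ∈ Ioo 0 1, HasDerivAt f' (f'' t) t)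
    (hf'' : IntervalIntegrable f'' volume 0 1) {x : ℝ} (hx : x ∈ Icc 0 1) :
    f x - (f 0 * (1 - x) + f 1 * x)
      = -((1 - x) * ∫ t in 0..x, t * f'' t) - x * ∫ t in x..1, (1 - t) * f'' t := by
  have taylor : ∀ y ∈ Icc (0 : ℝ) 1,
      f y = f x + f' x * (y - x) + ∫ t in x..y, (y - t) * f'' t := fun y hy =>
    taylor_integral_remainder_of_hasDerivAt (hf.mono (uIcc_subset_Icc hx hy))
      (hf'.mono (uIcc_subset_Icc hx hy))
      (fun t ht => hd t (Ioo_subset_Ioo (le_min hx.1 hy.1) (max_le hx.2 hy.2) ht))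
      (fun t ht => hd' t (Ioo_subset_Ioo (le_min hx.1 hy.1) (max_le hx.2 hy.2) ht))
      (hf''.mono_set (uIcc_subset_uIcc (Icc_subset_uIcc hx) (Icc_subset_uIcc hy)))
  have remainder_at_zero : ∫ t in x..0, (0 - t) * f'' t = ∫ t in 0..x, t * f'' t := by
    rw [integral_symm]
    simp only [zero_sub, neg_mul, intervalIntegral.integral_neg, neg_neg]
  have h0 := taylor 0 (left_mem_Icc.2 zero_le_one)
  have h1 := taylor 1 (right_mem_Icc.2 zero_le_one)
  rw [remainder_at_zero] at h0
  rw [h0, h1]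
  ring

theorem sq_sub_linearInterpolation_le {f f' f'' : ℝ → ℝ}
    (hf : ContinuousOn f (Icc 0 1)) (hf' : ContinuousOn f' (Icc 0 1))
    (hd : ∀ t ∈ Ioo 0 1, HasDerivAt f (f' t) t) (hd' : ∀ t ∈ Ioo 0 1, HasDerivAt f' (f'' t) t)
    (hf'' : ContinuousOn f'' (Icc 0 1)) {x : ℝ} (hx : x ∈ Icc 0 1) :
    (f x - (f 0 * (1 - x) + f 1 * x)) ^ 2
      ≤ 2 * ((1 - x) ^ 2 * x ^ 3 / 3 * (∫ t in 0..x, f'' t ^ 2)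
        + x ^ 2 * (1 - x) ^ 3 / 3 * ∫ t in x..1, f'' t ^ 2) := by
  rw [sub_linearInterpolation_eq_integral hf hf' hd hd'
    (hf''.intervalIntegrable_of_Icc zero_le_one) hx]
  have cs_left : (∫ t in 0..x, t * f'' t) ^ 2 ≤ x ^ 3 / 3 * ∫ t in 0..x, f'' t ^ 2 := by
    have h := sq_intervalIntegral_mul_le (u := fun t => t) hx.1 continuousOn_id
      (hf''.mono (Icc_subset_Icc_right hx.2))
    convert h using 2
    norm_num [integral_pow]
  have cs_right : (∫ t in x..1, (1 - t) * f'' t) ^ 2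
      ≤ (1 - x) ^ 3 / 3 * ∫ t in x..1, f'' t ^ 2 := by
    have h := sq_intervalIntegral_mul_le (u := fun t => 1 - t) hx.2
      (continuousOn_const.sub continuousOn_id) (hf''.mono (Icc_subset_Icc_left hx.1))
    convert h using 2
    norm_num [intervalIntegral.integral_comp_sub_left (fun t => t ^ 2), integral_pow]
  have two_sq : ∀ a b : ℝ, (-a - b) ^ 2 ≤ 2 * (a ^ 2 + b ^ 2) := fun a b => by
    nlinarith [sq_nonneg (a - b)]
  refine (two_sq _ _).trans ?_
  linear_combination 2 * mul_le_mul_of_nonneg_left cs_left (sq_nonneg (1 - x))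
    + 2 * mul_le_mul_of_nonneg_left cs_right (sq_nonneg x)

theorem integral_sq_sub_linearInterpolation_mul_le {f f' f'' g : ℝ → ℝ}
    (hf : ContinuousOn f (Icc 0 1)) (hf' : ContinuousOn f' (Icc 0 1))
    (hd : ∀ t ∈ Ioo 0 1, HasDerivAt f (f' t) t) (hd' : ∀ t ∈ Ioo 0 1, HasDerivAt f' (f'' t) t)
    (hf'' : ContinuousOn f'' (Icc 0 1)) (hg0 : ∀ x ∈ Icc (0 : ℝ) 1, 0 ≤ g x)
    (hgc : ContinuousOn g (Icc 0 1)) :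
    ∫ x in (0 : ℝ)..1, (f x - (f 0 * (1 - x) + f 1 * x)) ^ 2 * g x
      ≤ 2 * ∫ t in (0 : ℝ)..1, ((∫ x in (0 : ℝ)..t, g x * (x ^ 2 * (1 - x) ^ 3 / 3))
          + ∫ x in t..1, g x * ((1 - x) ^ 2 * x ^ 3 / 3)) * f'' t ^ 2 := by
  have hgA : ContinuousOn (fun x => g x * ((1 - x) ^ 2 * x ^ 3 / 3)) (Icc 0 1) := by fun_prop
  have hgB : ContinuousOn (fun x => g x * (x ^ 2 * (1 - x) ^ 3 / 3)) (Icc 0 1) := by fun_prop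
  have hq : ContinuousOn (fun t => f'' t ^ 2) (Icc 0 1) := by fun_prop
  rw [← integral_mul_primitive_add_mul_tail_eq zero_le_one hgA hgB hq,
    ← intervalIntegral.integral_const_mul]
  refine integral_mono_on zero_le_one ?_ ?_ fun x hx => ?_
  · exact ((hf.sub (by fun_prop)).pow 2 |>.mul hgc).intervalIntegrable_of_Icc zero_le_one
  · have := continuousOn_primitive_of_le zero_le_one hq
    have := continuousOn_tail_of_le zero_le_one hq
    exact ContinuousOn.intervalIntegrable_of_Icc zero_le_one (by fun_prop)
  · refine (mul_le_mul_of_nonneg_right (sq_sub_linearInterpolation_le hf hf' hd hd' hf'' hx)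
      (hg0 x hx)).trans_eq ?_
    ring

/-- Weighted squared interpolation error on the unit interval:
`∫_0^1 (f̂(ξ) − L̂(ξ))² ĝ(ξ) dξ ≤ 2 ∫_0^1 Ĝ(t) (f̂″(t))² dt`, where
`Ĝ(t) = ∫_0^t ĝ(ξ) ξ²(1−ξ)³/3 dξ + ∫_t^1 ĝ(ξ) (1−ξ)²ξ³/3 dξ`. -/
theorem unit_interval_weighted_error_bound
    (f g : ℝ → ℝ) (hf : ContDiffOn ℝ 2 f (Set.Icc 0 1))
    (hg0 : ∀ ξ ∈ Set.Icc (0:ℝ) 1, 0 ≤ g ξ)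
    (hgc : ContinuousOn g (Set.Icc 0 1)) :
    ∫ ξ in (0:ℝ)..1, (f ξ - (f 0 * (1 - ξ) + f 1 * ξ)) ^ 2 * g ξ
      ≤ 2 * ∫ t in (0:ℝ)..1,
          ((∫ ξ in (0:ℝ)..t, g ξ * (ξ ^ 2 * (1 - ξ) ^ 3 / 3))
            + ∫ ξ in t..(1:ℝ), g ξ * ((1 - ξ) ^ 2 * ξ ^ 3 / 3))
          * (deriv (deriv f) t) ^ 2 := by
  obtain ⟨f', f'', hf', hf'', hd, hd'⟩ := exists_hasDerivAt_of_contDiffOn_two zero_lt_one hf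
  refine (integral_sq_sub_linearInterpolation_mul_le hf.continuousOn hf' hd hd' hf'' hg0
    hgc).trans_eq ?_
  -- `deriv (deriv f)` agrees with `f''` on the open interval, hence almost everywhere
  rw [integral_of_le zero_le_one, integral_of_le zero_le_one, integral_Ioc_eq_integral_Ioo,
    integral_Ioc_eq_integral_Ioo]
  refine congrArg _ (setIntegral_congr_fun measurableSet_Ioo fun t ht => ?_)
  rw [deriv_deriv_eq_of_hasDerivAt isOpen_Ioo hd hd' ht]
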